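/- With the fixed-s orthogonal family setup, for every n ≥ 2 one has ((n+1)/s)·(B_n − C_n) + h_n/h_{n−1} − 1 − C_{n+1}·(B_n − C_n) + (B_n − C_n)² = 0. -/

import Mathlib

/-!
With `⟨f, g⟩ := ∮ f(z) g(1/z) e^{s(z + 1/z)} dz/z`, multiplication by `z` is an isometry,
`⟨z f, z g⟩ = ⟨f, g⟩`, and integrating the exact differential `d(f(z) g(1/z) e^{s(z + 1/z)})`
over the circle shows that `T := z (d/dz + s)` is self-adjoint. Expanding `⟨T p_n, p_{n-1}⟩ =
⟨p_n, T p_{n-1}⟩` and `⟨T p_n, z p_n⟩ = ⟨p_n, T (z p_n)⟩` with orthogonality and the recurrence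
gives two linear relations in the subleading coefficient of `p_n`; eliminating it yields the
identity.
-/

open Polynomial Complex Metric

namespace Polynomial

variable {R : Type*} [CommRing R]

theorem coeff_X_mul_derivative (q : R[X]) (j : ℕ) :
    (X * derivative q).coeff j = j * q.coeff j := by
  cases j with
  | zero => simp
  | succ j => rw [coeff_X_mul, coeff_derivative]; push_cast; ring

theorem coeff_X_mul_derivative_sub_C_mul (q : R[X]) (a : R) (j : ℕ) :
    (X * derivative q - C a * q).coeff j = (j - a) * q.coeff j := by
  rw [coeff_sub, coeff_C_mul, coeff_X_mul_derivative, sub_mul]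

end Polynomial

namespace LinearMap.BilinForm

variable {R : Type*} [CommRing R] (B : LinearMap.BilinForm R R[X])

theorem C_mul_left (a : R) (f g : R[X]) : B (C a * f) g = a * B f g := by
  rw [← smul_eq_C_mul, smul_left]

theorem C_mul_right (a : R) (f g : R[X]) : B f (C a * g) = a * B f g := by
  rw [← smul_eq_C_mul, smul_right]

end LinearMap.BilinForm

open LinearMap.BilinForm

def SatisfiesRecurrence {R : Type*} [CommRing R] (p : ℕ → R[X]) (b c : ℕ → R) : Prop :=
  ∀ k, X * (p (k + 1) + C (c (k + 1)) * p k) = p (k + 2) + C (b (k + 1)) * p (k + 1)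

structure IsMonicOrthogonalFamily {R : Type*} [CommRing R] (B : LinearMap.BilinForm R R[X])
    (p : ℕ → R[X]) : Prop where
  monic : ∀ n, (p n).Monic
  natDegree_eq : ∀ n, (p n).natDegree = n
  apply_eq_zero : ∀ n m, n ≠ m → B (p n) (p m) = 0

namespace IsMonicOrthogonalFamily

variable {R : Type*} [CommRing R] {B : LinearMap.BilinForm R R[X]} {p : ℕ → R[X]}

theorem flip (hp : IsMonicOrthogonalFamily B p) : IsMonicOrthogonalFamily B.flip p :=
  ⟨hp.monic, hp.natDegree_eq, fun n m hnm => hp.apply_eq_zero m n hnm.symm⟩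

theorem coeff_self (hp : IsMonicOrthogonalFamily B p) (n : ℕ) : (p n).coeff n = 1 := by
  simpa only [hp.natDegree_eq] using (hp.monic n).coeff_natDegree

theorem coeff_eq_zero_of_lt (hp : IsMonicOrthogonalFamily B p) {n j : ℕ} (h : n < j) :
    (p n).coeff j = 0 :=
  coeff_eq_zero_of_natDegree_lt (by rwa [hp.natDegree_eq])

theorem degree_sub_C_coeff_mul_lt (hp : IsMonicOrthogonalFamily B p) {q : R[X]} {n : ℕ}
    (hq : q.natDegree ≤ n) : (q - C (q.coeff n) * p n).degree < n := by
  refine (degree_lt_iff_coeff_zero _ _).2 fun j hj => ?_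
  rw [coeff_sub, coeff_C_mul]
  rcases hj.eq_or_lt with rfl | hj
  · rw [hp.coeff_self, mul_one, sub_self]
  · rw [coeff_eq_zero_of_natDegree_lt (hq.trans_lt hj), hp.coeff_eq_zero_of_lt hj, mul_zero,
      sub_zero]

theorem apply_eq_zero_of_degree_lt (hp : IsMonicOrthogonalFamily B p) {q : R[X]} {n : ℕ}
    (hq : q.degree < n) : B q (p n) = 0 := by
  suffices ∀ m ≤ n, ∀ q : R[X], q.degree < m → B q (p n) = 0 from this n le_rfl q hq
  intro m
  induction m with
  | zero =>
    intro _ q hq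
    rw [degree_eq_bot.mp (Nat.WithBot.lt_zero_iff.mp hq), map_zero, LinearMap.zero_apply]
  | succ m ih =>
    intro hmn q hq
    have hqm : q.natDegree ≤ m :=
      natDegree_le_iff_coeff_eq_zero.2 fun j hj => (degree_lt_iff_coeff_zero q (m + 1)).1 hq j hj
    rw [← sub_add_cancel q (C (q.coeff m) * p m), map_add, LinearMap.add_apply,
      ih (by omega) _ (hp.degree_sub_C_coeff_mul_lt hqm), C_mul_left,
      hp.apply_eq_zero m n (by omega), mul_zero, add_zero]

theorem apply_eq_coeff_mul (hp : IsMonicOrthogonalFamily B p) {q : R[X]} {n : ℕ}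
    (hq : q.natDegree ≤ n) : B q (p n) = q.coeff n * B (p n) (p n) := by
  conv_lhs => rw [← sub_add_cancel q (C (q.coeff n) * p n)]
  rw [map_add, LinearMap.add_apply,
    hp.apply_eq_zero_of_degree_lt (hp.degree_sub_C_coeff_mul_lt hq), C_mul_left, zero_add]

theorem apply_X_pow_mul (hp : IsMonicOrthogonalFamily B p) (j k : ℕ) :
    B (X ^ j * p k) (p (k + j)) = B (p (k + j)) (p (k + j)) := by
  rw [hp.apply_eq_coeff_mul, coeff_X_pow_mul, hp.coeff_self, one_mul]
  exact natDegree_mul_le.trans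
    (by rw [hp.natDegree_eq, add_comm]; gcongr; exact natDegree_X_pow_le j)

theorem apply_X_mul (hp : IsMonicOrthogonalFamily B p) (k : ℕ) :
    B (X * p k) (p (k + 1)) = B (p (k + 1)) (p (k + 1)) := by
  simpa using hp.apply_X_pow_mul 1 k

theorem apply_derivative_self (hp : IsMonicOrthogonalFamily B p) (n : ℕ) :
    B (derivative (p n)) (p n) = 0 :=
  hp.apply_eq_zero_of_degree_lt <| (degree_lt_iff_coeff_zero _ _).2 fun j hj => by
    rw [coeff_derivative, hp.coeff_eq_zero_of_lt (by omega), zero_mul]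

theorem apply_X_mul_derivative_pred (hp : IsMonicOrthogonalFamily B p) (k : ℕ) :
    B (X * derivative (p k)) (p (k + 1)) = 0 :=
  hp.apply_eq_zero_of_degree_lt <| (degree_lt_iff_coeff_zero _ _).2 fun j hj => by
    rw [coeff_X_mul_derivative, hp.coeff_eq_zero_of_lt (by omega), mul_zero]

theorem natDegree_X_mul_derivative_sub_le (hp : IsMonicOrthogonalFamily B p) (k : ℕ) :
    (X * derivative (p (k + 1)) - C ((k : R) + 1) * p (k + 1)).natDegree ≤ k := by
  refine natDegree_le_iff_coeff_eq_zero.2 fun j hj => ?_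
  rw [coeff_X_mul_derivative_sub_C_mul]
  rcases (Nat.succ_le_of_lt hj).eq_or_lt with rfl | hj
  · push_cast; ring
  · rw [hp.coeff_eq_zero_of_lt hj, mul_zero]

theorem apply_X_mul_derivative (hp : IsMonicOrthogonalFamily B p) (k : ℕ) :
    B (X * derivative (p (k + 1))) (p k) = -(p (k + 1)).coeff k * B (p k) (p k) := by
  rw [← sub_add_cancel (X * derivative (p (k + 1))) (C ((k : R) + 1) * p (k + 1)), map_add,
    LinearMap.add_apply, hp.apply_eq_coeff_mul (hp.natDegree_X_mul_derivative_sub_le k),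
    C_mul_left, hp.apply_eq_zero (k + 1) k (by omega), coeff_X_mul_derivative_sub_C_mul]
  ring

theorem apply_X_sq_mul_derivative (hp : IsMonicOrthogonalFamily B p) (k : ℕ) :
    B (X ^ 2 * derivative (p (k + 1))) (p (k + 1)) =
      (k + 1) * B (X * p (k + 1)) (p (k + 1)) -
        (p (k + 1)).coeff k * B (p (k + 1)) (p (k + 1)) := by
  have hsplit : X ^ 2 * derivative (p (k + 1)) =
      X * (X * derivative (p (k + 1)) - C ((k : R) + 1) * p (k + 1)) +
        C ((k : R) + 1) * (X * p (k + 1)) := by ring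
  have hdeg :
      (X * (X * derivative (p (k + 1)) - C ((k : R) + 1) * p (k + 1))).natDegree ≤ k + 1 :=
    natDegree_mul_le.trans <| by
      rw [add_comm]; gcongr; exacts [hp.natDegree_X_mul_derivative_sub_le k, natDegree_X_le]
  rw [hsplit, map_add, LinearMap.add_apply, hp.apply_eq_coeff_mul hdeg, C_mul_left, coeff_X_mul,
    coeff_X_mul_derivative_sub_C_mul]
  ring

section Recurrence

variable {b c : ℕ → R}

theorem apply_X_mul_self (hp : IsMonicOrthogonalFamily B p) (hrec : SatisfiesRecurrence p b c)
    (k : ℕ) :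
    B (X * p (k + 1)) (p (k + 1)) = (b (k + 1) - c (k + 1)) * B (p (k + 1)) (p (k + 1)) := by
  rw [show X * p (k + 1) = p (k + 2) + C (b (k + 1)) * p (k + 1) - C (c (k + 1)) * (X * p k) by
    linear_combination hrec k]
  simp only [map_add, map_sub, LinearMap.add_apply, LinearMap.sub_apply, C_mul_left,
    hp.apply_X_mul k, hp.apply_eq_zero (k + 2) (k + 1) (by omega)]
  ring

theorem apply_X_mul_succ (hp : IsMonicOrthogonalFamily B p) (hrec : SatisfiesRecurrence p b c)
    (k : ℕ) : B (X * p (k + 2)) (p (k + 1)) =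
      -c (k + 2) * (b (k + 1) - c (k + 1)) * B (p (k + 1)) (p (k + 1)) := by
  rw [show X * p (k + 2) =
      p (k + 3) + C (b (k + 2)) * p (k + 2) - C (c (k + 2)) * (X * p (k + 1)) by
    linear_combination hrec (k + 1)]
  simp only [map_add, map_sub, LinearMap.add_apply, LinearMap.sub_apply, C_mul_left,
    hp.apply_X_mul_self hrec, hp.apply_eq_zero (k + 3) (k + 1) (by omega),
    hp.apply_eq_zero (k + 2) (k + 1) (by omega)]
  ring

theorem apply_X_sq_mul_pred (hp : IsMonicOrthogonalFamily B p) (hrec : SatisfiesRecurrence p b c)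
    (k : ℕ) : B (X ^ 2 * p (k + 1)) (p (k + 2)) =
      (b (k + 2) - c (k + 2) + b (k + 1) - c (k + 1)) * B (p (k + 2)) (p (k + 2)) := by
  rw [show X ^ 2 * p (k + 1) =
      X * p (k + 2) + C (b (k + 1)) * (X * p (k + 1)) - C (c (k + 1)) * (X ^ 2 * p k) by
    linear_combination X * hrec k]
  simp only [map_add, map_sub, LinearMap.add_apply, LinearMap.sub_apply, C_mul_left,
    hp.apply_X_mul_self hrec (k + 1), hp.apply_X_mul (k + 1), hp.apply_X_pow_mul 2 k]
  ring

theorem apply_X_sq_mul_self (hp : IsMonicOrthogonalFamily B p) (hrec : SatisfiesRecurrence p b c)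
    (k : ℕ) : B (X ^ 2 * p (k + 2)) (p (k + 2)) =
      ((b (k + 2) - c (k + 2)) ^ 2 - c (k + 3) * (b (k + 2) - c (k + 2)) -
        c (k + 2) * (b (k + 1) - c (k + 1))) * B (p (k + 2)) (p (k + 2)) := by
  rw [show X ^ 2 * p (k + 2) =
      X * p (k + 3) + C (b (k + 2)) * (X * p (k + 2)) - C (c (k + 2)) * (X ^ 2 * p (k + 1)) by
    linear_combination X * hrec (k + 1)]
  simp only [map_add, map_sub, LinearMap.add_apply, LinearMap.sub_apply, C_mul_left,
    hp.apply_X_mul_succ hrec (k + 1), hp.apply_X_mul_self hrec (k + 1),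
    hp.apply_X_sq_mul_pred hrec k]
  ring

theorem selfAdjoint_apply_pred {s : R}
    (hT : ∀ f g, B (X * (derivative f + C s * f)) g = B f (X * (derivative g + C s * g)))
    (hp : IsMonicOrthogonalFamily B p) (hrec : SatisfiesRecurrence p b c) (k : ℕ) :
    -(p (k + 2)).coeff (k + 1) * B (p (k + 1)) (p (k + 1)) -
        s * c (k + 2) * (b (k + 1) - c (k + 1)) * B (p (k + 1)) (p (k + 1)) =
      s * B (p (k + 2)) (p (k + 2)) := by
  have hflip_deriv : B (p (k + 2)) (X * derivative (p (k + 1))) = 0 :=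
    hp.flip.apply_X_mul_derivative_pred (k + 1)
  have hflip_X : B (p (k + 2)) (X * p (k + 1)) = B (p (k + 2)) (p (k + 2)) :=
    hp.flip.apply_X_mul (k + 1)
  have hT_pred := hT (p (k + 2)) (p (k + 1))
  simp only [show ∀ f, X * (derivative f + C s * f) = X * derivative f + C s * (X * f) from
    fun f => by ring] at hT_pred
  rw [map_add, map_add, LinearMap.add_apply, C_mul_left, C_mul_right,
    hp.apply_X_mul_derivative (k + 1), hp.apply_X_mul_succ hrec k, hflip_deriv, hflip_X] at hT_pred
  linear_combination hT_pred

theorem selfAdjoint_apply_X_mul_self {s : R} (hX : ∀ f g, B (X * f) (X * g) = B f g)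
    (hT : ∀ f g, B (X * (derivative f + C s * f)) g = B f (X * (derivative g + C s * g)))
    (hp : IsMonicOrthogonalFamily B p) (hrec : SatisfiesRecurrence p b c) (k : ℕ) :
    s * B (p (k + 2)) (p (k + 2)) =
      ((k + 3) * (b (k + 2) - c (k + 2)) - (p (k + 2)).coeff (k + 1) +
        s * ((b (k + 2) - c (k + 2)) ^ 2 - c (k + 3) * (b (k + 2) - c (k + 2)) -
          c (k + 2) * (b (k + 1) - c (k + 1)))) * B (p (k + 2)) (p (k + 2)) := by
  have hflip_sq := hp.flip.apply_X_sq_mul_self hrec k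
  have hflip_sq_deriv := hp.flip.apply_X_sq_mul_derivative (k + 1)
  have hflip_self := hp.flip.apply_X_mul_self hrec (k + 1)
  simp only [LinearMap.BilinForm.flip_apply, show k + 1 + 1 = k + 2 from rfl]
    at hflip_sq hflip_sq_deriv hflip_self
  have hT_self := hT (p (k + 2)) (X * p (k + 2))
  rw [hX, show X * (derivative (X * p (k + 2)) + C s * (X * p (k + 2))) =
      X * p (k + 2) + X ^ 2 * derivative (p (k + 2)) + C s * (X ^ 2 * p (k + 2)) by
    rw [derivative_mul, derivative_X]; ring] at hT_self
  rw [map_add, LinearMap.add_apply, C_mul_left, hp.apply_derivative_self, map_add, map_add,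
    C_mul_right, hflip_sq, hflip_sq_deriv, hflip_self] at hT_self
  push_cast at hT_self
  linear_combination hT_self

end Recurrence

theorem recurrence_coeff_identity {K : Type*} [Field K] {B : LinearMap.BilinForm K K[X]}
    {p : ℕ → K[X]} (hp : IsMonicOrthogonalFamily B p) {s : K} (hs : s ≠ 0)
    (hX : ∀ f g, B (X * f) (X * g) = B f g)
    (hT : ∀ f g, B (X * (derivative f + C s * f)) g = B f (X * (derivative g + C s * g)))
    {b c : ℕ → K} (hrec : SatisfiesRecurrence p b c)
    (k : ℕ) (h₁ : B (p (k + 1)) (p (k + 1)) ≠ 0) (h₂ : B (p (k + 2)) (p (k + 2)) ≠ 0) :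
    (((k + 2 : ℕ) : K) + 1) / s * (b (k + 2) - c (k + 2)) +
        B (p (k + 2)) (p (k + 2)) / B (p (k + 1)) (p (k + 1)) - 1 -
      c (k + 3) * (b (k + 2) - c (k + 2)) + (b (k + 2) - c (k + 2)) ^ 2 = 0 := by
  have hpred := selfAdjoint_apply_pred hT hp hrec k
  have hself := mul_right_cancel₀ h₂ (selfAdjoint_apply_X_mul_self hX hT hp hrec k)
  field_simp
  push_cast
  linear_combination -hpred - B (p (k + 1)) (p (k + 1)) * hself

end IsMonicOrthogonalFamily

theorem circleIntegrable_pairing (s : ℝ) (f g : ℂ[X]) :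
    CircleIntegrable (fun z => f.eval z * g.eval z⁻¹ * exp (s * (z + z⁻¹)) / z) 0 1 := by
  refine ContinuousOn.circleIntegrable zero_le_one ?_
  have h0 : ∀ z ∈ sphere (0 : ℂ) 1, z ≠ 0 := fun z hz => ne_zero_of_mem_unit_sphere ⟨z, hz⟩
  fun_prop (disch := assumption)

noncomputable def circlePairing (s : ℝ) : LinearMap.BilinForm ℂ ℂ[X] :=
  LinearMap.mk₂ ℂ (fun f g => ∮ z in C(0, 1), f.eval z * g.eval z⁻¹ * exp (s * (z + z⁻¹)) / z)
    (fun f₁ f₂ g => by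
      rw [← circleIntegral.integral_add (circleIntegrable_pairing s f₁ g)
        (circleIntegrable_pairing s f₂ g)]
      congr 1 with z; rw [eval_add]; ring)
    (fun a f g => by
      rw [← circleIntegral.integral_smul]
      congr 1 with z; rw [eval_smul, smul_eq_mul]; ring)
    (fun f g₁ g₂ => by
      rw [← circleIntegral.integral_add (circleIntegrable_pairing s f g₁)
        (circleIntegrable_pairing s f g₂)]
      congr 1 with z; rw [eval_add]; ring)
    (fun a f g => by
      rw [← circleIntegral.integral_smul]
      congr 1 with z; rw [eval_smul, smul_eq_mul]; ring)

theorem circlePairing_apply (s : ℝ) (f g : ℂ[X]) :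
    circlePairing s f g = ∮ z in C(0, 1), f.eval z * g.eval z⁻¹ * exp (s * (z + z⁻¹)) / z :=
  rfl

theorem circlePairing_X_mul_X (s : ℝ) (f g : ℂ[X]) :
    circlePairing s (X * f) (X * g) = circlePairing s f g := by
  rw [circlePairing_apply, circlePairing_apply]
  refine circleIntegral.integral_congr zero_le_one fun z hz => ?_
  have hz0 : z ≠ 0 := ne_zero_of_mem_unit_sphere ⟨z, hz⟩
  simp only [eval_mul, eval_X]
  field_simp

theorem circlePairing_X_mul_derivative_add (s : ℝ) (f g : ℂ[X]) :
    circlePairing s (X * (derivative f + C (s : ℂ) * f)) g =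
      circlePairing s f (X * (derivative g + C (s : ℂ) * g)) := by
  rw [← sub_eq_zero, circlePairing_apply, circlePairing_apply,
    ← circleIntegral.integral_sub (circleIntegrable_pairing s _ _) (circleIntegrable_pairing s _ _)]
  refine circleIntegral.integral_eq_zero_of_hasDerivWithinAt
    (f := fun z => f.eval z * g.eval z⁻¹ * exp (s * (z + z⁻¹))) zero_le_one fun z hz => ?_
  have hz0 : z ≠ 0 := ne_zero_of_mem_unit_sphere ⟨z, hz⟩
  refine HasDerivAt.hasDerivWithinAt <| HasDerivAt.congr_deriv
    (((f.hasDerivAt z).mul ((g.hasDerivAt z⁻¹).comp z (hasDerivAt_inv hz0))).mul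
      (((hasDerivAt_id z).add (hasDerivAt_inv hz0)).const_mul (s : ℂ)).cexp) ?_
  simp only [Pi.mul_apply, Pi.add_apply, Function.comp_apply, id, eval_mul, eval_add, eval_X,
    eval_C]
  field_simp
  ring

theorem stmt_16_general (s : ℝ) (hs : 0 < s)
    (p : ℕ → Polynomial ℂ)
    (hmonic : ∀ n, (p n).Monic)
    (hdeg : ∀ n, (p n).natDegree = n)
    (horth : ∀ n m, n ≠ m →
      (∮ z in C(0, 1), (p n).eval z * (p m).eval z⁻¹ *
        Complex.exp (s * (z + z⁻¹)) / z) = 0)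
    (h : ℕ → ℂ)
    (hh : ∀ n, h n = ∮ z in C(0, 1), (p n).eval z * (p n).eval z⁻¹ *
        Complex.exp (s * (z + z⁻¹)) / z)
    (hne : ∀ n, h n ≠ 0)
    (Bn Cn : ℕ → ℂ)
    (hrec : ∀ n, 1 ≤ n →
      Polynomial.X * (p n + Polynomial.C (Cn n) * p (n - 1)) =
        p (n + 1) + Polynomial.C (Bn n) * p n)
    (n : ℕ) (hn : 2 ≤ n) :
    ((n : ℂ) + 1) / (s : ℂ) * (Bn n - Cn n) + h n / h (n - 1) - 1 -
      Cn (n + 1) * (Bn n - Cn n) + (Bn n - Cn n) ^ 2 = 0 := by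
  obtain ⟨k, rfl⟩ : ∃ k, n = k + 2 := ⟨n - 2, by omega⟩
  obtain rfl : h = fun n => circlePairing s (p n) (p n) := funext hh
  have hp : IsMonicOrthogonalFamily (circlePairing s) p := ⟨hmonic, hdeg, horth⟩
  exact hp.recurrence_coeff_identity (ofReal_ne_zero.mpr hs.ne') (circlePairing_X_mul_X s)
    (circlePairing_X_mul_derivative_add s) (fun k => hrec (k + 1) (by omega)) k
    (hne _) (hne _)

/-- For `n ≥ 2`: `((n+1)/s)(B_n − C_n) + h_n/h_{n−1} − 1 − C_{n+1}(B_n − C_n) + (B_n − C_n)² = 0`. -/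
theorem stmt_16 (s : ℝ) (hs : 0 < s)
    (p : ℕ → Polynomial ℂ)
    (hmonic : ∀ n, (p n).Monic)
    (hdeg : ∀ n, (p n).natDegree = n)
    (hreal : ∀ n k, ((p n).coeff k).im = 0)
    (hp0 : ∀ n, (p n).coeff 0 ≠ 0)
    (horth : ∀ n m, n ≠ m →
      (∮ z in C(0, 1), (p n).eval z * (p m).eval z⁻¹ *
        Complex.exp (s * (z + z⁻¹)) / z) = 0)
    (h : ℕ → ℂ)
    (hh : ∀ n, h n = ∮ z in C(0, 1), (p n).eval z * (p n).eval z⁻¹ *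
        Complex.exp (s * (z + z⁻¹)) / z)
    (hne : ∀ n, h n ≠ 0)
    (Bn Cn : ℕ → ℂ)
    (hB : ∀ n, Bn n = -((p (n + 1)).coeff 0 / (p n).coeff 0))
    (hC : ∀ n, 1 ≤ n → Cn n = Bn n * h n / h (n - 1))
    (hrec : ∀ n, 1 ≤ n →
      Polynomial.X * (p n + Polynomial.C (Cn n) * p (n - 1)) =
        p (n + 1) + Polynomial.C (Bn n) * p n)
    (n : ℕ) (hn : 2 ≤ n) :
    ((n : ℂ) + 1) / (s : ℂ) * (Bn n - Cn n) + h n / h (n - 1) - 1 -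
      Cn (n + 1) * (Bn n - Cn n) + (Bn n - Cn n) ^ 2 = 0 :=
  stmt_16_general s hs p hmonic hdeg horth h hh hne Bn Cn hrec n hn
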